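/- For every natural number m and every i with 1 ≤ i ≤ n, the i-th coordinate of D^m η_n equals the number of weakly increasing sequences j₀ ≤ j₁ ≤ … ≤ j_m of elements of {1,…,n} with j₀ = i and j_m = n. (These sequences correspond to the directed paths of length m from v_i to v_n in the graph G_n, which has vertices v_1,…,v_n and one edge from v_i to v_j for each pair i ≤ j.) -/

import Mathlib

/-!
`ℤⁿ` is the abelian group of functions `Fin n → ℤ` (coordinates `1,…,n`
corresponding to indices `0,…,n-1`).  `shiftE n` is the shift operator `t`,
`(tη)(i) = η(i+1)` for `i < n` and `(tη)(n) = 0`, and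
`DE n = 1 + t + t² + … + t^{n−1}`.
-/

noncomputable section

/-- The shift operator `t` on `ℤⁿ`. -/
def shiftE (n : ℕ) : Module.End ℤ (Fin n → ℤ) :=
  (AddMonoidHom.mk' (fun (η : Fin n → ℤ) (i : Fin n) => if h : (i : ℕ) + 1 < n then η ⟨(i : ℕ) + 1, h⟩ else 0) (by
    intro a b
    funext i
    by_cases h : (i : ℕ) + 1 < n <;> simp [h])).toIntLinearMap

/-- The operator `D = 1 + t + t² + … + t^{n−1}` on `ℤⁿ`. -/
def DE (n : ℕ) : Module.End ℤ (Fin n → ℤ) := ∑ i ∈ Finset.range n, shiftE n ^ i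

/-!
Since `t^k` shifts by `k` and `tⁿ = 0`, `D` acts as the upper triangular all-ones matrix:
`(Dη)(i) = ∑_{j ≥ i} η(j)`. Peeling off the first step `j₀ ≤ j₁` and inducting on `m`,
`(D^m η)(i)` is the sum of `η(j_m)` over the weakly increasing sequences `j₀ ≤ … ≤ j_m` with
`j₀ = i`; for `η = η_n` this counts those ending at `n`.
-/

lemma shiftE_apply (n : ℕ) (η : Fin n → ℤ) (i : Fin n) :
    shiftE n η i = if h : (i : ℕ) + 1 < n then η ⟨i + 1, h⟩ else 0 := rfl

lemma shiftE_pow_apply (n k : ℕ) (η : Fin n → ℤ) (i : Fin n) :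
    (shiftE n ^ k) η i = if h : (i : ℕ) + k < n then η ⟨i + k, h⟩ else 0 := by
  induction k generalizing η with
  | zero => simp
  | succ k ih =>
    rw [pow_succ, Module.End.mul_apply, ih]
    simp only [shiftE_apply]
    split_ifs <;> first | rfl | omega

lemma Finset.sum_range_shift_of_eq_zero {M : Type*} [AddCommMonoid M] {e : ℕ → M} {n a : ℕ}
    (ha : a ≤ n) (he : ∀ k, n ≤ k → e k = 0) :
    ∑ k ∈ range n, e (a + k) = ∑ k ∈ range n, if a ≤ k then e k else 0 := by
  obtain ⟨r, rfl⟩ := Nat.exists_eq_add_of_le ha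
  calc ∑ k ∈ range (a + r), e (a + k) = ∑ k ∈ range r, e (a + k) := by
        rw [add_comm a r, sum_range_add, sum_eq_zero (s := range a) fun k _ => he _ (by omega),
          add_zero]
    _ = ∑ k ∈ range (a + r), if a ≤ k then e k else 0 := by
        rw [sum_range_add, sum_eq_zero fun k hk => if_neg (by simpa using hk)]
        simp

lemma DE_apply (n : ℕ) (η : Fin n → ℤ) (i : Fin n) :
    DE n η i = ∑ j with i ≤ j, η j := by
  set e : ℕ → ℤ := fun k => if h : k < n then η ⟨k, h⟩ else 0
  have hη : ∀ j : Fin n, η j = e j := fun j => by simp [e]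
  have hDE : DE n η i = ∑ k ∈ Finset.range n, e (i + k) := by
    simp [DE, shiftE_pow_apply, e]
  rw [hDE, Finset.sum_range_shift_of_eq_zero i.isLt.le fun k hk => dif_neg (by omega),
    Finset.sum_filter, ← Fin.sum_univ_eq_sum_range (fun k => if (i : ℕ) ≤ k then e k else 0)]
  simp only [hη, Fin.le_iff_val_le_val]

section MonotoneFrom

variable {α : Type*} [Preorder α] [Fintype α]

open scoped Classical in
def monotoneFrom (m : ℕ) (i : α) : Finset (Fin (m + 1) → α) := {f | Monotone f ∧ f 0 = i}

lemma mem_monotoneFrom {m : ℕ} {i : α} {f : Fin (m + 1) → α} :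
    f ∈ monotoneFrom m i ↔ Monotone f ∧ f 0 = i := by
  simp [monotoneFrom]

lemma monotoneFrom_zero (i : α) : monotoneFrom 0 i = {fun _ => i} := by
  ext f
  rw [mem_monotoneFrom, Finset.mem_singleton, funext_iff, Fin.forall_fin_one]
  exact and_iff_right (Subsingleton.monotone (α := Fin 1) f)

lemma cons_mem_monotoneFrom_succ {m : ℕ} {a i : α} {g : Fin (m + 1) → α} :
    Fin.cons a g ∈ monotoneFrom (m + 1) i ↔ a = i ∧ i ≤ g 0 ∧ Monotone g := by
  rw [mem_monotoneFrom, Fin.cons_zero, show Monotone (Fin.cons a g : Fin (m + 2) → α) ↔ _ from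
    monotone_vecCons]
  constructor
  · rintro ⟨⟨hag, hg⟩, rfl⟩
    exact ⟨rfl, hag, hg⟩
  · rintro ⟨rfl, hag, hg⟩
    exact ⟨⟨hag, hg⟩, rfl⟩

lemma sum_monotoneFrom_succ [DecidableLE α] {M : Type*} [AddCommMonoid M] (m : ℕ) (i : α)
    (φ : (Fin (m + 2) → α) → M) :
    ∑ f ∈ monotoneFrom (m + 1) i, φ f =
      ∑ j with i ≤ j, ∑ g ∈ monotoneFrom m j, φ (Fin.cons i g) := by
  rw [Finset.sum_sigma']
  refine Finset.sum_bij' (fun f _ => ⟨Fin.tail f 0, Fin.tail f⟩) (fun p _ => Fin.cons i p.2)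
    (fun f hf => ?_) (fun p hp => ?_) (fun f hf => ?_) (fun p hp => ?_) (fun f hf => ?_)
  · rw [← Fin.cons_self_tail f, cons_mem_monotoneFrom_succ] at hf
    simpa [hf.2.1, mem_monotoneFrom] using hf.2.2
  · simp only [Finset.mem_sigma, Finset.mem_filter, Finset.mem_univ, true_and,
      mem_monotoneFrom] at hp
    exact cons_mem_monotoneFrom_succ.2 ⟨rfl, hp.2.2 ▸ hp.1, hp.2.1⟩
  · rw [← (mem_monotoneFrom.1 hf).2]
    exact Fin.cons_self_tail f
  · simp only [Finset.mem_sigma, Finset.mem_filter, Finset.mem_univ, true_and,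
      mem_monotoneFrom] at hp
    simp [hp.2.2]
  · rw [← (mem_monotoneFrom.1 hf).2, Fin.cons_self_tail]

end MonotoneFrom

lemma DE_pow_apply (n m : ℕ) (η : Fin n → ℤ) (i : Fin n) :
    (DE n ^ m) η i = ∑ f ∈ monotoneFrom m i, η (f (Fin.last m)) := by
  induction m generalizing i with
  | zero => simp [monotoneFrom_zero]
  | succ m ih =>
    rw [pow_succ', Module.End.mul_apply, DE_apply, sum_monotoneFrom_succ]
    simp only [ih, ← Fin.succ_last, Fin.cons_succ]

/-- For every `m` and every `i`, the `i`-th coordinate of `D^m η_n` equals the number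
of weakly increasing sequences `j₀ ≤ j₁ ≤ … ≤ j_m` in `{1,…,n}` with `j₀ = i` and
`j_m = n` (i.e. the number of directed paths of length `m` from `v_i` to `v_n` in the
graph `G_n`). -/
theorem Dpow_etaN_counts_paths (n : ℕ) (hn : 2 ≤ n) (m : ℕ) (i : Fin n) :
    ((DE n ^ m) (Pi.single (⟨n - 1, by omega⟩ : Fin n) (1 : ℤ))) i =
      (Nat.card {f : Fin (m + 1) → Fin n //
        Monotone f ∧ f 0 = i ∧ f (Fin.last m) = ⟨n - 1, by omega⟩} : ℤ) := by
  rw [DE_pow_apply, Nat.card_eq_fintype_card, Fintype.card_subtype]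
  simp only [Pi.single_apply, Finset.sum_boole, monotoneFrom, Finset.filter_filter, and_assoc]
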